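/- In the affine Weyl group Ŵ = W ⋉ T of type C_{n+k}, with T the translation subgroup, the set Ŵ_t^1 = {w ∈ Ŵ : w^{-1}(Δ̂_t^+) ⊂ Δ̂^+} equals W_t^1: every element of Ŵ_t^1 has trivial translation part. -/

import Mathlib

/-- Standard basis vector `e_i` of `ℤ^N`. -/
def eZ (N : ℕ) (i : Fin N) : Fin N → ℤ :=
  fun j => if j = i then 1 else 0

/-- The positive roots of type `C_N`. -/
def posRoots (N : ℕ) : Set (Fin N → ℤ) :=
  {v | ∃ i j : Fin N,
    (i < j ∧ v = eZ N i - eZ N j) ∨ (i ≤ j ∧ v = eZ N i + eZ N j)}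

/-- The positive roots of `t = sp_{2n} ⊕ sp_{2k} ⊂ sp_{2(n+k)}`. -/
def posRootsT (n k : ℕ) : Set (Fin (n + k) → ℤ) :=
  {v | ∃ i j : Fin (n + k),
    (((i : ℕ) < n ∧ (j : ℕ) < n) ∨ (n ≤ (i : ℕ) ∧ n ≤ (j : ℕ))) ∧
    ((i < j ∧ v = eZ (n + k) i - eZ (n + k) j) ∨
      (i ≤ j ∧ v = eZ (n + k) i + eZ (n + k) j))}

/-- The positive affine roots of type `C_N`, encoded as pairs `(β, m)` standing for
`β + mδ`: the positive imaginary roots `(0, m)`, `m > 0`, together with the positive real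
roots `β + mδ` with `β ∈ Δ` and (`m > 0`, or `m = 0` and `β ∈ Δ⁺`). -/
def affPos (N : ℕ) : Set ((Fin N → ℤ) × ℤ) :=
  {p | (p.1 = 0 ∧ 0 < p.2) ∨
    ((p.1 ∈ posRoots N ∨ -p.1 ∈ posRoots N) ∧
      (0 < p.2 ∨ (p.2 = 0 ∧ p.1 ∈ posRoots N)))}

/-- The positive affine roots of the subalgebra `t = sp_{2n} ⊕ sp_{2k}`. -/
def affPosT (n k : ℕ) : Set ((Fin (n + k) → ℤ) × ℤ) :=
  {p | (p.1 = 0 ∧ 0 < p.2) ∨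
    ((p.1 ∈ posRootsT n k ∨ -p.1 ∈ posRootsT n k) ∧
      (0 < p.2 ∨ (p.2 = 0 ∧ p.1 ∈ posRootsT n k)))}

/-- Action of `w⁻¹` for the signed permutation `w = (σ, ε)` on `ℤ^N`. -/
def invAct (N : ℕ) (σ : Equiv.Perm (Fin N)) (ε : Fin N → ℤˣ) (v : Fin N → ℤ) :
    Fin N → ℤ :=
  fun l => (ε l : ℤ) * v (σ l)

/-! The real affine roots `δ ± 2e_i` of `t` are mapped by `w t_μ` to roots `±2ε_l e_l + (1 ± 2ε_l μ_l)δ`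
with `i = σ l`. A real affine root is positive only if its `δ`-coefficient is nonnegative, so
`|2 μ_l| ≤ 1`, i.e. `μ_l = 0`. With `μ = 0` the roots of `t` with `δ`-coefficient `0` are then mapped to
finite roots with `δ`-coefficient `0`, which must be positive. -/

/-- `ŵ⁻¹(β + mδ) = w⁻¹β + (m + ⟨w⁻¹β, μ⟩)δ` for `ŵ = w t_μ`, `w = (σ, ε)`. -/
def affInvAct (N : ℕ) (σ : Equiv.Perm (Fin N)) (ε : Fin N → ℤˣ) (μ : Fin N → ℤ)
    (p : (Fin N → ℤ) × ℤ) : (Fin N → ℤ) × ℤ :=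
  (invAct N σ ε p.1, p.2 + invAct N σ ε p.1 ⬝ᵥ μ)

section

variable {N : ℕ}

lemma snd_nonneg_of_mem_affPos {p : (Fin N → ℤ) × ℤ} (hp : p ∈ affPos N) : 0 ≤ p.2 := by
  rcases hp with ⟨-, hm⟩ | ⟨-, hm | ⟨hm, -⟩⟩ <;> omega

lemma mem_posRoots_of_mk_zero_mem_affPos {β : Fin N → ℤ} (h : (β, 0) ∈ affPos N) :
    β ∈ posRoots N := by
  rcases h with ⟨-, h0⟩ | ⟨-, h0 | ⟨-, hβ⟩⟩
  · exact absurd h0 (lt_irrefl 0)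
  · exact absurd h0 (lt_irrefl 0)
  · exact hβ

variable (σ : Equiv.Perm (Fin N)) (ε : Fin N → ℤˣ)

lemma invAct_add (v w : Fin N → ℤ) : invAct N σ ε (v + w) = invAct N σ ε v + invAct N σ ε w := by
  funext l
  simp only [invAct, Pi.add_apply, mul_add]

lemma invAct_neg (v : Fin N → ℤ) : invAct N σ ε (-v) = -invAct N σ ε v := by
  funext l
  simp only [invAct, Pi.neg_apply, mul_neg]

lemma invAct_eZ_apply_perm (l : Fin N) : invAct N σ ε (eZ N (σ l)) = Pi.single l (ε l : ℤ) := by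
  funext j
  by_cases hj : j = l
  · subst hj
    simp [invAct, eZ]
  · simp [invAct, eZ, σ.injective.eq_iff, hj]

lemma affInvAct_zero_translation (p : (Fin N → ℤ) × ℤ) :
    affInvAct N σ ε 0 p = (invAct N σ ε p.1, p.2) := by
  simp [affInvAct]

end

section

variable {n k : ℕ}

lemma eZ_add_eZ_mem_posRootsT (i : Fin (n + k)) : eZ (n + k) i + eZ (n + k) i ∈ posRootsT n k := by
  refine ⟨i, i, ?_, Or.inr ⟨le_rfl, rfl⟩⟩
  rcases Nat.lt_or_ge (i : ℕ) n with hi | hi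
  · exact Or.inl ⟨hi, hi⟩
  · exact Or.inr ⟨hi, hi⟩

lemma mk_mem_affPosT_of_pos {β : Fin (n + k) → ℤ} {m : ℤ}
    (hβ : β ∈ posRootsT n k ∨ -β ∈ posRootsT n k) (hm : 0 < m) : (β, m) ∈ affPosT n k :=
  Or.inr ⟨hβ, Or.inl hm⟩

lemma mk_zero_mem_affPosT {β : Fin (n + k) → ℤ} (hβ : β ∈ posRootsT n k) :
    (β, 0) ∈ affPosT n k :=
  Or.inr ⟨Or.inl hβ, Or.inr ⟨rfl, hβ⟩⟩

theorem translation_eq_zero_of_mapsTo_affPos {σ : Equiv.Perm (Fin (n + k))}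
    {ε : Fin (n + k) → ℤˣ} {μ : Fin (n + k) → ℤ}
    (h : ∀ p ∈ affPosT n k, affInvAct (n + k) σ ε μ p ∈ affPos (n + k)) : μ = 0 := by
  funext l
  have hβ := eZ_add_eZ_mem_posRootsT (n := n) (k := k) (σ l)
  have hplus := snd_nonneg_of_mem_affPos (h _ (mk_mem_affPosT_of_pos (.inl hβ) one_pos))
  have hminus := snd_nonneg_of_mem_affPos
    (h _ (mk_mem_affPosT_of_pos (.inr (by rwa [neg_neg])) one_pos))
  simp only [affInvAct, invAct_neg, invAct_add, invAct_eZ_apply_perm, neg_dotProduct,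
    add_dotProduct, single_dotProduct] at hplus hminus
  have hεμ : (ε l : ℤ) * μ l = 0 := by omega
  exact (Units.mul_right_eq_zero (ε l)).mp hεμ

end

/-- `Ŵ_t^1 = W_t^1`: if an element `ŵ = w ∘ t_μ` of the affine Weyl group `Ŵ = W ⋉ T` of
type `C_{n+k}` (with `w = (σ, ε)` a signed permutation and `t_μ` the translation by
`μ ∈ ℤ^{n+k}`, so that `ŵ⁻¹(β + mδ) = w⁻¹β + (m + ⟨w⁻¹β, μ⟩)δ`) maps all positive affine
roots of `t = sp_{2n} ⊕ sp_{2k}` under `ŵ⁻¹` into the positive affine roots, then its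
translation part is trivial, `μ = 0`, and `w ∈ W_t^1`. -/
theorem affine_WT1_eq_finite (n k : ℕ) (σ : Equiv.Perm (Fin (n + k)))
    (ε : Fin (n + k) → ℤˣ) (μ : Fin (n + k) → ℤ)
    (h : ∀ p ∈ affPosT n k,
      (invAct (n + k) σ ε p.1,
        p.2 + ∑ i, invAct (n + k) σ ε p.1 i * μ i) ∈ affPos (n + k)) :
    μ = 0 ∧ ∀ v ∈ posRootsT n k, invAct (n + k) σ ε v ∈ posRoots (n + k) := by
  have hμ : μ = 0 := translation_eq_zero_of_mapsTo_affPos h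
  refine ⟨hμ, fun v hv => mem_posRoots_of_mk_zero_mem_affPos ?_⟩
  have hv' : affInvAct (n + k) σ ε μ (v, 0) ∈ affPos (n + k) := h _ (mk_zero_mem_affPosT hv)
  rwa [hμ, affInvAct_zero_translation] at hv'
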